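/- (Negative dependence / Fischer's inequality) Let K be an n×n real symmetric positive semidefinite matrix and let S₁, S₂ ⊆ {1,…,n} be disjoint subsets. Then det(K_{S₁∪S₂}) ≤ det(K_{S₁}) · det(K_{S₂}). Consequently, for a DPP with marginal kernel K, the joint inclusion probability satisfies P(S₁ ∪ S₂ ⊆ Y) ≤ P(S₁ ⊆ Y) · P(S₂ ⊆ Y). -/

import Mathlib

/-!
Fischer's inequality via the Schur complement. Reindexing `K_{S₁ ∪ S₂}` as a block matrix
`[[A, B], [Bᴴ, D]]` gives `det = det A * det (D - Bᴴ A⁻¹ B)` when `A` is invertible, and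
`D` exceeds the positive semidefinite Schur complement by the positive semidefinite matrix
`Bᴴ A⁻¹ B`; the determinant is monotone on positive semidefinite matrices, since
`det (X + R⋆ R) = det X * det (1 + R X⁻¹ R⋆)` and `det (1 + W) ≥ 1` for `W ⪰ 0`.
When `A` is singular, a kernel vector of `A` padded by zeros lies in the kernel of the whole
matrix, so both sides vanish.
-/

open Matrix BigOperators

/-- The principal submatrix of `M` indexed by the subset `S`. -/
def principalSubmatrix {n : ℕ} (M : Matrix (Fin n) (Fin n) ℝ) (S : Finset (Fin n)) :
    Matrix {i // i ∈ S} {i // i ∈ S} ℝ :=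
  M.submatrix (fun i => (i : Fin n)) (fun i => (i : Fin n))

open Unitary
open scoped ComplexOrder MatrixOrder

namespace Matrix

variable {𝕜 m p : Type*} [RCLike 𝕜] [Fintype m] [DecidableEq m] [Fintype p] [DecidableEq p]

lemma det_conjStarAlgAut (U : unitary (Matrix m m 𝕜)) (M : Matrix m m 𝕜) :
    (conjStarAlgAut 𝕜 _ U M).det = M.det := by
  rw [conjStarAlgAut_apply, det_mul, det_mul, mul_right_comm, ← det_mul,
    mul_star_self_of_mem U.prop, det_one, one_mul]

namespace PosSemidef

lemma one_le_det_one_add {Z : Matrix m m 𝕜} (hZ : Z.PosSemidef) : 1 ≤ (1 + Z).det := by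
  have hdiag : 1 + Z = conjStarAlgAut 𝕜 _ hZ.1.eigenvectorUnitary
      (diagonal fun i => 1 + (hZ.1.eigenvalues i : 𝕜)) := by
    conv_lhs => rw [hZ.1.spectral_theorem]
    rw [← map_one (conjStarAlgAut 𝕜 _ hZ.1.eigenvectorUnitary), ← map_add, ← diagonal_one,
      diagonal_add]
    rfl
  rw [hdiag, det_conjStarAlgAut, det_diagonal]
  exact Finset.one_le_prod fun i _ =>
    le_add_of_nonneg_right (by exact_mod_cast hZ.eigenvalues_nonneg i)

lemma det_le_det_add {X Y : Matrix m m 𝕜} (hX : X.PosSemidef) (hY : Y.PosSemidef) :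
    X.det ≤ (X + Y).det := by
  by_cases hdet : X.det = 0
  · rw [hdet]
    exact (hX.add hY).det_nonneg
  obtain ⟨R, rfl⟩ := CStarAlgebra.nonneg_iff_eq_star_mul_self.mp hY.nonneg
  rw [det_add_mul _ _ (isUnit_iff_ne_zero.2 hdet)]
  exact le_mul_of_one_le_right hX.det_nonneg
    (hX.inv.mul_mul_conjTranspose_same R).one_le_det_one_add

lemma det_fromBlocks_eq_zero {A : Matrix m m 𝕜} {B : Matrix m p 𝕜} {C : Matrix p m 𝕜}
    {D : Matrix p p 𝕜} (hM : (fromBlocks A B C D).PosSemidef) (hA : A.det = 0) :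
    (fromBlocks A B C D).det = 0 := by
  obtain ⟨x, hx, hAx⟩ := exists_mulVec_eq_zero_iff.2 hA
  refine exists_mulVec_eq_zero_iff.1
    ⟨Sum.elim x 0, fun h => hx (funext fun i => congrFun h (.inl i)), ?_⟩
  rw [← hM.dotProduct_mulVec_zero_iff, fromBlocks_mulVec]
  simp [hAx, dotProduct]

lemma det_fromBlocks_le {A : Matrix m m 𝕜} {B : Matrix m p 𝕜} {D : Matrix p p 𝕜}
    (hM : (fromBlocks A B Bᴴ D).PosSemidef) :
    (fromBlocks A B Bᴴ D).det ≤ A.det * D.det := by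
  have hA : A.PosSemidef := hM.submatrix Sum.inl
  by_cases hdet : A.det = 0
  · rw [hM.det_fromBlocks_eq_zero hdet, hdet, zero_mul]
  have hApos : A.PosDef := hA.posDef_iff_det_ne_zero.2 hdet
  have : Invertible A := invertibleOfIsUnitDet A (isUnit_iff_ne_zero.2 hdet)
  have hschur : (D - Bᴴ * A⁻¹ * B).PosSemidef := (PosDef.fromBlocks₁₁ B D hApos).1 hM
  rw [det_fromBlocks₁₁, invOf_eq_nonsing_inv]
  refine mul_le_mul_of_nonneg_left ?_ hA.det_nonneg
  simpa using hschur.det_le_det_add (hApos.inv.posSemidef.conjTranspose_mul_mul_same B)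

end PosSemidef

end Matrix

lemma Matrix.IsHermitian.principalSubmatrix_union_eq_fromBlocks {n : ℕ}
    {K : Matrix (Fin n) (Fin n) ℝ} (hK : K.IsHermitian) {S₁ S₂ : Finset (Fin n)}
    (h : Disjoint S₁ S₂) :
    (principalSubmatrix K (S₁ ∪ S₂)).submatrix (Equiv.Finset.union S₁ S₂ h)
        (Equiv.Finset.union S₁ S₂ h) =
      Matrix.fromBlocks (principalSubmatrix K S₁) (K.submatrix (↑) (↑))
        (K.submatrix (↑) (↑) : Matrix S₁ S₂ ℝ)ᴴ (principalSubmatrix K S₂) := by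
  rw [conjTranspose_submatrix, hK.eq]
  ext (i | i) (j | j) <;> rfl

/-- Negative dependence (Fischer's inequality): for a positive semidefinite
marginal kernel `K` and disjoint subsets `S₁, S₂`, the joint inclusion probability
satisfies `det(K_{S₁∪S₂}) ≤ det(K_{S₁}) · det(K_{S₂})`. -/
theorem negative_dependence {n : ℕ} (K : Matrix (Fin n) (Fin n) ℝ)
    (hK : K.PosSemidef) (S₁ S₂ : Finset (Fin n)) (hdisj : Disjoint S₁ S₂) :
    (principalSubmatrix K (S₁ ∪ S₂)).det
      ≤ (principalSubmatrix K S₁).det * (principalSubmatrix K S₂).det := by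
  have hblocks := hK.isHermitian.principalSubmatrix_union_eq_fromBlocks hdisj
  rw [← det_submatrix_equiv_self (Equiv.Finset.union S₁ S₂ hdisj), hblocks]
  exact PosSemidef.det_fromBlocks_le (hblocks ▸ (hK.submatrix _).submatrix _)
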